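/- Let n ≥ 2, p ∈ {2,...,n}, and μ ∈ Γ_p with μ_1 ≤ μ_2 ≤ ... ≤ μ_n. Then there exists a positive constant C depending only on n and p such that μ_1 ≥ -C max{ σ_p(μ)^{1/p}, (max{-σ_{p+1}(μ), 0})^{1/(p+1)} }. -/

import Mathlib

/-!
Deleting an entry from a vector of `Γ_P` gives a vector of `Γ_{P-1}`. By induction on `P`: the
shifts `ν = μ + t` (`t ≥ 0`) stay in `Γ_P`, and `σ_{P-1}(ν|k)` is positive for large `t`. It
cannot vanish, for then Newton's inequality `σ_{P-2} σ_P ≤ σ_{P-1}²` on `ν|k`, where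
`σ_{P-2}(ν|k) > 0`, would give `σ_P(ν) = σ_P(ν|k) + ν_k σ_{P-1}(ν|k) ≤ 0`.

Let `μ_1 < 0`. Deleting the `p - 1` largest entries leaves a vector of `Γ_1`, so
`-μ_1 < (n - p) μ_{n-p+1}`; hence `μ_{n-p+1}, …, μ_n > 0` and
`σ_{p-1}(μ) ≥ μ_n ⋯ μ_{n-p+2} ≥ μ_n μ_{n-p+1}^{p-2}`. Since `μ_1 < 0`, also
`σ_{p-1}(μ|1) ≥ σ_{p-1}(μ)`. Keeping only the term `k = 1` of
`Σ_k μ_k² σ_{p-1}(μ|k) = σ_1 σ_p - (p+1) σ_{p+1}` and using `σ_1 ≤ n μ_n` gives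
`|μ_1|^p μ_n ≲ μ_n σ_p + max(-σ_{p+1}, 0)`. If the first term dominates, this bounds `|μ_1|^p`
by `σ_p`; otherwise `|μ_1| ≲ μ_n` bounds `|μ_1|^{p+1}` by `max(-σ_{p+1}, 0)`.
-/

/-- The `p`-th elementary symmetric polynomial of `μ : Fin n → ℝ`. -/
noncomputable def esymm (n p : ℕ) (μ : Fin n → ℝ) : ℝ :=
  ∑ t ∈ Finset.powersetCard p Finset.univ, ∏ i ∈ t, μ i

/-- The `p`-th Gårding cone in `ℝⁿ`. -/
def gardingCone (n p : ℕ) : Set (Fin n → ℝ) :=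
  {μ | ∀ q, 1 ≤ q → q ≤ p → 0 < esymm n q μ}

open Finset Polynomial

section ElementarySymmetric

variable {ι R : Type*} [CommSemiring R]

def esymmOn (s : Finset ι) (μ : ι → R) (q : ℕ) : R :=
  ∑ t ∈ s.powersetCard q, ∏ i ∈ t, μ i

@[simp]
theorem esymmOn_zero (s : Finset ι) (μ : ι → R) : esymmOn s μ 0 = 1 := by
  simp [esymmOn]

theorem esymmOn_one (s : Finset ι) (μ : ι → R) : esymmOn s μ 1 = ∑ i ∈ s, μ i := by
  simp [esymmOn, powersetCard_one]

theorem esymmOn_eq_zero_of_card_lt {s : Finset ι} {q : ℕ} (h : #s < q) (μ : ι → R) :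
    esymmOn s μ q = 0 := by
  rw [esymmOn, powersetCard_eq_empty.2 h, sum_empty]

theorem esymmOn_insert [DecidableEq ι] {s : Finset ι} {a : ι} (ha : a ∉ s) (μ : ι → R)
    (q : ℕ) : esymmOn (insert a s) μ (q + 1) = esymmOn s μ (q + 1) + μ a * esymmOn s μ q := by
  simp only [esymmOn, ← esymm_map_val, insert_val_of_notMem ha, Multiset.map_cons,
    Multiset.esymm, Multiset.powersetCard_cons, Multiset.map_add, Multiset.sum_add,
    Multiset.map_map, Function.comp_def, Multiset.prod_cons, Multiset.sum_map_mul_left]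

theorem esymmOn_eq_erase [DecidableEq ι] {s : Finset ι} {a : ι} (ha : a ∈ s) (μ : ι → R)
    (q : ℕ) :
    esymmOn s μ (q + 1) = esymmOn (s.erase a) μ (q + 1) + μ a * esymmOn (s.erase a) μ q := by
  conv_lhs => rw [← insert_erase ha]
  exact esymmOn_insert (notMem_erase a s) μ q

theorem coeff_prod_X_add_C (s : Finset ι) (μ : ι → R) {k : ℕ} (hk : k ≤ #s) :
    (∏ i ∈ s, (X + C (μ i))).coeff k = esymmOn s μ (#s - k) :=
  s.prod_X_add_C_coeff μ hk

theorem sum_mul_esymmOn_erase [DecidableEq ι] (s : Finset ι) (μ : ι → R) (q : ℕ) :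
    ∑ k ∈ s, μ k * esymmOn (s.erase k) μ q = (q + 1) * esymmOn s μ (q + 1) := by
  induction s using Finset.induction_on generalizing q with
  | empty => simp [esymmOn_eq_zero_of_card_lt (s := ∅) (q := q + 1) (by simp)]
  | insert a s ha ih =>
    cases q with
    | zero => simp [esymmOn_one]
    | succ q =>
      have herase : ∀ k ∈ s, (insert a s).erase k = insert a (s.erase k) := fun k hk =>
        erase_insert_of_ne (ne_of_mem_of_not_mem hk ha).symm
      rw [sum_insert ha, erase_insert ha, sum_congr rfl fun k hk => by
        rw [herase k hk, esymmOn_insert (fun h => ha (mem_of_mem_erase h))]]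
      simp only [mul_add, sum_add_distrib, mul_left_comm _ (μ a), ← mul_sum, ih,
        esymmOn_insert ha]
      push_cast
      ring

end ElementarySymmetric

theorem sum_sq_mul_esymmOn_erase {ι R : Type*} [CommRing R] [DecidableEq ι] (s : Finset ι)
    (μ : ι → R) (q : ℕ) :
    ∑ k ∈ s, μ k ^ 2 * esymmOn (s.erase k) μ q
      = esymmOn s μ 1 * esymmOn s μ (q + 1) - (q + 2) * esymmOn s μ (q + 2) := by
  have hterm : ∀ k ∈ s, μ k ^ 2 * esymmOn (s.erase k) μ q
      = μ k * esymmOn s μ (q + 1) - μ k * esymmOn (s.erase k) μ (q + 1) := fun k hk => by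
    rw [esymmOn_eq_erase hk]; ring
  rw [sum_congr rfl hterm, sum_sub_distrib, ← sum_mul, ← esymmOn_one,
    sum_mul_esymmOn_erase]
  push_cast
  ring

namespace Polynomial

theorem Splits.derivative_of_real {f : ℝ[X]} (hf : f.Splits) : (derivative f).Splits := by
  apply splits_iff_card_roots.2
  have := card_roots_le_derivative f
  have := card_roots' (derivative f)
  rw [splits_iff_card_roots.1 hf, natDegree_derivative] at *
  omega

theorem Splits.iterate_derivative_of_real {f : ℝ[X]} (hf : f.Splits) (k : ℕ) :
    (derivative^[k] f).Splits := by
  induction k with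
  | zero => exact hf
  | succ k ih => rw [Function.iterate_succ_apply']; exact ih.derivative_of_real

theorem Splits.eval_mul_eval_derivative_derivative_le {K : Type*} [Field K] [LinearOrder K]
    [IsStrictOrderedRing K] {f : K[X]} (hf : f.Splits) (x : K) :
    f.eval x * (derivative (derivative f)).eval x ≤ ((derivative f).eval x) ^ 2 := by
  rw [hf.eq_prod_roots]
  generalize f.roots = t
  generalize f.leadingCoeff = c
  induction t using Multiset.induction_on with
  | empty => simp
  | cons a t ih =>
    rw [Multiset.map_cons, Multiset.prod_cons, mul_left_comm]
    set g := C c * (t.map fun r => X - C r).prod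
    -- (x - a)^2 (g'^2 - g g'') + g^2 ≥ 0 is what is left after expanding
    simp only [derivative_mul, derivative_sub, derivative_X, derivative_C, sub_zero, one_mul,
      derivative_add, eval_add, eval_mul, eval_sub, eval_X, eval_C] at ih ⊢
    nlinarith [mul_nonneg (sq_nonneg (x - a)) (sub_nonneg.2 ih), sq_nonneg (g.eval x)]

theorem eval_zero_iterate_derivative {R : Type*} [Semiring R] (f : R[X]) (k : ℕ) :
    (derivative^[k] f).eval 0 = k.factorial * f.coeff k := by
  rw [← coeff_zero_eq_eval_zero, coeff_iterate_derivative, zero_add, Nat.descFactorial_self,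
    nsmul_eq_mul]

theorem splits_prod_X_add_C {ι K : Type*} [Field K] (s : Finset ι) (μ : ι → K) :
    (∏ i ∈ s, (X + C (μ i))).Splits :=
  Splits.prod fun _ _ => Splits.of_natDegree_le_one (natDegree_X_add_C _).le

theorem coeff_le_coeff_taylor {R : Type*} [CommSemiring R] [PartialOrder R]
    [IsOrderedRing R] {f : R[X]} {t : R} (ht : 0 ≤ t) {j : ℕ}
    (hf : ∀ i, j ≤ i → 0 ≤ f.coeff i) : f.coeff j ≤ (taylor t f).coeff j := by
  rw [taylor_coeff, eval_eq_sum_range]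
  have hterm : ∀ i ∈ range ((hasseDeriv j f).natDegree + 1),
      0 ≤ (hasseDeriv j f).coeff i * t ^ i := fun i _ => by
    rw [hasseDeriv_coeff]
    exact mul_nonneg (mul_nonneg (Nat.cast_nonneg _) (hf _ (by omega))) (pow_nonneg ht _)
  simpa [hasseDeriv_coeff] using single_le_sum hterm (mem_range.2 (Nat.succ_pos _))

end Polynomial

/-- Newton's inequality, in a weak form: `f f'' ≤ f' ^ 2` at `0` for `f` the `(#s - q - 2)`-th
derivative of `∏ i ∈ s, (X + μ i)`, which is real-rooted by Rolle's theorem. -/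
theorem esymmOn_mul_esymmOn_le {ι : Type*} (s : Finset ι) (μ : ι → ℝ) {q : ℕ}
    (hq : q + 2 ≤ #s) :
    ((#s : ℝ) - q) * (esymmOn s μ q * esymmOn s μ (q + 2))
      ≤ ((#s : ℝ) - q - 1) * esymmOn s μ (q + 1) ^ 2 := by
  set f := ∏ i ∈ s, (X + C (μ i))
  obtain ⟨K, hK⟩ : ∃ K, #s = K + q + 2 := ⟨#s - (q + 2), by omega⟩
  have hval : ∀ k r, k + r = #s → (derivative^[k] f).eval 0 = k.factorial * esymmOn s μ r :=
    fun k r hkr => by rw [eval_zero_iterate_derivative, coeff_prod_X_add_C _ _ (by omega),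
      (by omega : #s - k = r)]
  have hsplit := (splits_prod_X_add_C s μ).iterate_derivative_of_real K
  have hf : (derivative^[K] f).eval 0 * (derivative^[K + 2] f).eval 0
      ≤ ((derivative^[K + 1] f).eval 0) ^ 2 := by
    simpa only [← Function.iterate_succ_apply' derivative] using
      hsplit.eval_mul_eval_derivative_derivative_le 0
  rw [hval K (q + 2) (by omega), hval (K + 1) (q + 1) (by omega), hval (K + 2) q (by omega),
    Nat.factorial_succ, Nat.factorial_succ] at hf
  have hpos : (0 : ℝ) < K.factorial ^ 2 * (K + 1) := by positivity
  refine le_of_mul_le_mul_left ?_ hpos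
  rw [hK]
  push_cast at hf ⊢
  linear_combination hf

section GardingCone

variable {ι : Type*}

theorem esymmOn_pos {s : Finset ι} {μ : ι → ℝ} (hμ : ∀ i ∈ s, 0 < μ i) {q : ℕ} (hq : q ≤ #s) :
    0 < esymmOn s μ q :=
  sum_pos (fun _ ht => prod_pos fun i hi => hμ i ((mem_powersetCard.1 ht).1 hi))
    (powersetCard_nonempty.2 hq)

-- `Γ_P` for the entries of `μ` indexed by `s`; the condition at `q = 0` is vacuous.
def gardingConeOn (s : Finset ι) (P : ℕ) : Set (ι → ℝ) :=
  {μ | ∀ q ≤ P, 0 < esymmOn s μ q}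

variable {s : Finset ι} {P : ℕ} {μ : ι → ℝ}

theorem gardingConeOn_anti {P Q : ℕ} (h : P ≤ Q) : gardingConeOn s Q ⊆ gardingConeOn s P :=
  fun _ hμ q hq => hμ q (hq.trans h)

theorem le_card_of_mem_gardingConeOn (hμ : μ ∈ gardingConeOn s P) : P ≤ #s := by
  by_contra! h
  simpa [esymmOn_eq_zero_of_card_lt h] using hμ P le_rfl

theorem add_const_mem_gardingConeOn (hμ : μ ∈ gardingConeOn s P) {t : ℝ} (ht : 0 ≤ t) :
    (fun i => μ i + t) ∈ gardingConeOn s P := by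
  intro q hq
  have hqs : q ≤ #s := hq.trans (le_card_of_mem_gardingConeOn hμ)
  have htaylor : ∏ i ∈ s, (X + C (μ i + t)) = taylor t (∏ i ∈ s, (X + C (μ i))) := by
    simp only [taylor_apply, Polynomial.prod_comp, add_comp, X_comp, C_comp, C_add]
    exact prod_congr rfl fun _ _ => by ring
  have hcoeff : ∀ i, #s - q ≤ i → 0 ≤ (∏ i ∈ s, (X + C (μ i))).coeff i := by
    intro i hi
    rcases le_or_gt i #s with his | his
    · rw [coeff_prod_X_add_C s μ his]
      exact (hμ _ (by omega)).le
    · rw [coeff_eq_zero_of_natDegree_lt (by simpa [natDegree_prod_of_monic, monic_X_add_C])]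
  have := coeff_le_coeff_taylor ht hcoeff
  rw [← htaylor, coeff_prod_X_add_C s μ (by omega), coeff_prod_X_add_C s _ (by omega),
    Nat.sub_sub_self hqs] at this
  exact (hμ q hq).trans_le this

theorem esymmOn_add_two_nonpos {q : ℕ} (h : esymmOn s μ (q + 1) = 0) (hq : 0 < esymmOn s μ q) :
    esymmOn s μ (q + 2) ≤ 0 := by
  rcases lt_or_ge #s (q + 2) with hs | hs
  · exact (esymmOn_eq_zero_of_card_lt hs μ).le
  have hnewton := esymmOn_mul_esymmOn_le s μ hs
  have hsq : (0 : ℝ) < #s - q := by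
    have : ((q + 2 : ℕ) : ℝ) ≤ #s := by exact_mod_cast hs
    push_cast at this
    linarith
  rw [h, zero_pow two_ne_zero, mul_zero] at hnewton
  exact nonpos_of_mul_nonpos_right (nonpos_of_mul_nonpos_right hnewton hsq) hq

theorem mem_gardingConeOn_erase [DecidableEq ι] (hμ : μ ∈ gardingConeOn s (P + 1)) {k : ι}
    (hk : k ∈ s) : μ ∈ gardingConeOn (s.erase k) P := by
  induction P generalizing μ with
  | zero =>
    intro q hq
    obtain rfl : q = 0 := by omega
    simp
  | succ P ih =>
    intro q hq
    rcases hq.lt_or_eq with hq | rfl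
    · exact ih (gardingConeOn_anti (by omega) hμ) q (by omega)
    set g : ℝ → ℝ := fun t => esymmOn (s.erase k) (fun i => μ i + t) (P + 1)
    have hg_ne : ∀ t, 0 ≤ t → g t ≠ 0 := by
      intro t ht (hgt : esymmOn (s.erase k) (fun i => μ i + t) (P + 1) = 0)
      have hν := add_const_mem_gardingConeOn hμ ht
      have hP : 0 < esymmOn (s.erase k) (fun i => μ i + t) P :=
        ih (gardingConeOn_anti (by omega) hν) P le_rfl
      have := hν (P + 2) le_rfl
      rw [esymmOn_eq_erase hk, hgt, mul_zero, add_zero] at this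
      exact (esymmOn_add_two_nonpos hgt hP).not_gt this
    have hcard : P + 1 ≤ #(s.erase k) := by
      have := le_card_of_mem_gardingConeOn hμ
      rw [card_erase_of_mem hk]
      omega
    set T := ∑ i ∈ s, |μ i| + 1
    have hT : 0 ≤ T := by positivity
    have hgT : 0 < g T := esymmOn_pos (fun i hi => by
      have := single_le_sum (fun j _ => abs_nonneg (μ j)) (mem_of_mem_erase hi)
      linarith [neg_abs_le (μ i)]) hcard
    have hg : Continuous g := by
      unfold g esymmOn
      fun_prop
    by_contra! h0
    obtain ⟨t, ht, hgt⟩ := intermediate_value_Icc hT hg.continuousOn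
      ⟨by simpa [g] using h0, hgT.le⟩
    exact hg_ne t ht.1 hgt

theorem mem_gardingConeOn_sdiff [DecidableEq ι] {u : Finset ι}
    (hμ : μ ∈ gardingConeOn s (P + #u)) (hus : u ⊆ s) : μ ∈ gardingConeOn (s \ u) P := by
  induction u using Finset.induction_on generalizing P with
  | empty => simpa using hμ
  | insert a u ha ih =>
    rw [sdiff_insert]
    refine mem_gardingConeOn_erase (ih ?_ ((subset_insert a u).trans hus)) ?_
    · rwa [card_insert_of_notMem ha, ← add_assoc, add_right_comm] at hμ
    · exact mem_sdiff.2 ⟨hus (mem_insert_self a u), ha⟩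

theorem prod_le_esymmOn [DecidableEq ι] {u : Finset ι} (hμ : μ ∈ gardingConeOn s (#u + 1))
    (hus : u ⊆ s) (hu : ∀ i ∈ u, 0 ≤ μ i) : ∏ i ∈ u, μ i ≤ esymmOn s μ #u := by
  induction u using Finset.induction_on generalizing s with
  | empty => simp
  | insert a u ha ih =>
    have has : a ∈ s := hus (mem_insert_self a u)
    rw [card_insert_of_notMem ha] at hμ ⊢
    have hμa := mem_gardingConeOn_erase hμ has
    have hprod : ∏ i ∈ u, μ i ≤ esymmOn (s.erase a) μ #u :=
      ih (gardingConeOn_anti (by omega) hμa)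
        (subset_erase.2 ⟨(subset_insert a u).trans hus, ha⟩)
        fun i hi => hu i (mem_insert_of_mem hi)
    rw [prod_insert ha, esymmOn_eq_erase has]
    linarith [hμa (#u + 1) le_rfl,
      mul_le_mul_of_nonneg_left hprod (hu a (mem_insert_self a u))]

theorem esymmOn_le_esymmOn_erase [DecidableEq ι] {q : ℕ} (hμ : μ ∈ gardingConeOn s (q + 1))
    {k : ι} (hk : k ∈ s) (hμk : μ k ≤ 0) :
    esymmOn s μ (q + 1) ≤ esymmOn (s.erase k) μ (q + 1) := by
  rw [esymmOn_eq_erase hk]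
  linarith [mul_nonpos_of_nonpos_of_nonneg hμk (mem_gardingConeOn_erase hμ hk q le_rfl).le]

theorem sq_mul_esymmOn_erase_le [DecidableEq ι] {q : ℕ} (hμ : μ ∈ gardingConeOn s (q + 1))
    {k : ι} (hk : k ∈ s) :
    μ k ^ 2 * esymmOn (s.erase k) μ q
      ≤ esymmOn s μ 1 * esymmOn s μ (q + 1) - (q + 2) * esymmOn s μ (q + 2) := by
  rw [← sum_sq_mul_esymmOn_erase]
  exact single_le_sum (f := fun j => μ j ^ 2 * esymmOn (s.erase j) μ q)
    (fun j hj => mul_nonneg (sq_nonneg _) (mem_gardingConeOn_erase hμ hj q le_rfl).le) hk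

end GardingCone

theorem le_mul_rpow_of_pow_le {x c a : ℝ} {k : ℕ} (hk : k ≠ 0) (hx : 0 ≤ x) (hc : 1 ≤ c)
    (ha : 0 ≤ a) (h : x ^ k ≤ c * a) : x ≤ c * a ^ ((1 : ℝ) / k) := by
  have hc0 : 0 ≤ c := zero_le_one.trans hc
  rw [one_div, ← Real.pow_rpow_inv_natCast hc0 hk, ← Real.mul_rpow (by positivity) ha,
    Real.le_rpow_inv_iff_of_pos hx (by positivity) (by positivity), Real.rpow_natCast]
  exact h.trans (mul_le_mul_of_nonneg_right (le_self_pow₀ hc hk) ha)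

theorem pow_le_or_pow_succ_le_of_sq_mul_mul_pow_le {m a b σ τ N : ℝ} {p : ℕ} (hp : 2 ≤ p)
    (hN : 1 ≤ N) (hm : 0 ≤ m) (ha : 0 < a) (hab : a ≤ b) (hma : m ≤ N * a) (hτ : 0 ≤ τ)
    (h : m ^ 2 * b * a ^ (p - 2) ≤ N * b * σ + (p + 1) * τ) :
    m ^ p ≤ 2 * (p + 1) * N ^ p * σ ∨ m ^ (p + 1) ≤ 2 * (p + 1) * N ^ p * τ := by
  have hb : 0 < b := ha.trans_le hab
  have hNp : N ^ p = N ^ (p - 2) * N * N := by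
    rw [mul_assoc, ← pow_two, ← pow_add, Nat.sub_add_cancel hp]
  have hN' : N + (p + 1) ≤ 2 * (p + 1) * N := by nlinarith
  have hpow : m ^ p * b ≤ N ^ (p - 2) * (N * b * σ + (p + 1) * τ) := by
    calc m ^ p * b = m ^ 2 * b * m ^ (p - 2) := by
          rw [mul_right_comm, ← pow_add, Nat.add_sub_cancel' hp]
      _ ≤ m ^ 2 * b * (N * a) ^ (p - 2) := by gcongr
      _ = N ^ (p - 2) * (m ^ 2 * b * a ^ (p - 2)) := by ring
      _ ≤ _ := by gcongr
  rcases le_total τ (b * σ) with hτσ | hστ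
  · left
    refine le_of_mul_le_mul_right ?_ hb
    calc m ^ p * b ≤ N ^ (p - 2) * (N * b * σ + (p + 1) * τ) := hpow
      _ ≤ N ^ (p - 2) * ((2 * (p + 1) * N * N) * (b * σ)) := by
          refine mul_le_mul_of_nonneg_left ?_ (by positivity)
          have hbσ : 0 ≤ b * σ := hτ.trans hτσ
          have hN₀ : (0 : ℝ) ≤ 2 * (p + 1) * N := by nlinarith
          nlinarith [mul_le_mul_of_nonneg_right hN' hbσ,
            mul_le_mul_of_nonneg_left hτσ (by positivity : (0 : ℝ) ≤ p + 1),
            mul_nonneg (mul_nonneg hN₀ hbσ) (sub_nonneg.2 hN)]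
      _ = 2 * (p + 1) * N ^ p * σ * b := by rw [hNp]; ring
  · right
    calc m ^ (p + 1) = m * m ^ p := by ring
      _ ≤ (N * b) * m ^ p := by gcongr; exact hma.trans (by nlinarith)
      _ = N * (m ^ p * b) := by ring
      _ ≤ N * (N ^ (p - 2) * ((2 * (p + 1) * N) * τ)) := by
          refine mul_le_mul_of_nonneg_left (hpow.trans ?_) (by positivity)
          exact mul_le_mul_of_nonneg_left (by nlinarith) (by positivity)
      _ = 2 * (p + 1) * N ^ p * τ := by rw [hNp]; ring

theorem le_mul_max_rpow_of_sq_mul_mul_pow_le {m a b σ τ N : ℝ} {p : ℕ} (hp : 2 ≤ p)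
    (hN : 1 ≤ N) (hm : 0 ≤ m) (ha : 0 < a) (hab : a ≤ b) (hma : m ≤ N * a) (hσ : 0 ≤ σ)
    (hτ : 0 ≤ τ) (h : m ^ 2 * b * a ^ (p - 2) ≤ N * b * σ + (p + 1) * τ) :
    m ≤ 2 * (p + 1) * N ^ p * max (σ ^ ((1 : ℝ) / p)) (τ ^ ((1 : ℝ) / (p + 1))) := by
  have hc : 1 ≤ 2 * (p + 1) * N ^ p := by nlinarith [one_le_pow₀ (n := p) hN]
  rcases pow_le_or_pow_succ_le_of_sq_mul_mul_pow_le hp hN hm ha hab hma hτ h with hmp | hmp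
  · exact (le_mul_rpow_of_pow_le (by omega) hm hc hσ hmp).trans
      (mul_le_mul_of_nonneg_left (le_max_left _ _) (by linarith))
  · have := le_mul_rpow_of_pow_le (by omega) hm hc hτ hmp
    push_cast at this
    exact this.trans (mul_le_mul_of_nonneg_left (le_max_right _ _) (by linarith))

section Monotone

variable {n p : ℕ} {μ : Fin n → ℝ}

theorem esymm_eq_esymmOn : esymm n p μ = esymmOn univ μ p := rfl

theorem mem_gardingCone_iff : μ ∈ gardingCone n p ↔ μ ∈ gardingConeOn univ p := by
  refine ⟨fun h q hq => ?_, fun h q _ hq => h q hq⟩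
  rcases q.eq_zero_or_pos with rfl | hq₀
  · simp
  · exact h q hq₀ hq

theorem add_mul_pos_of_monotone (hμ : μ ∈ gardingConeOn univ p) (hmono : Monotone μ)
    {i₀ κ : Fin n} (hi₀ : i₀ ≤ κ) (hκ : (κ : ℕ) + p = n) : 0 < μ i₀ + (κ : ℕ) * μ κ := by
  have hcard : #(Ioi κ) = p - 1 := by rw [Fin.card_Ioi]; omega
  have hIic : μ ∈ gardingConeOn (univ \ Ioi κ) 1 :=
    mem_gardingConeOn_sdiff (by rwa [hcard, (by omega : 1 + (p - 1) = p)]) (subset_univ _)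
  have hsum := hIic 1 le_rfl
  rw [esymmOn_one, (by ext; simp : univ \ Ioi κ = Iic κ),
    ← add_sum_erase _ _ (mem_Iic.2 hi₀)] at hsum
  have hle : ∑ i ∈ (Iic κ).erase i₀, μ i ≤ #((Iic κ).erase i₀) • μ κ :=
    sum_le_card_nsmul _ _ _ fun i hi => hmono (mem_Iic.1 (mem_of_mem_erase hi))
  rw [card_erase_of_mem (mem_Iic.2 hi₀), Fin.card_Iic, Nat.add_sub_cancel, nsmul_eq_mul] at hle
  linarith

theorem mul_pow_le_esymmOn_of_monotone (hμ : μ ∈ gardingConeOn univ p) (hmono : Monotone μ)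
    {κ top : Fin n} (hκ : (κ : ℕ) + p = n) (htop : (top : ℕ) + 1 = n) (hp : 2 ≤ p)
    (hκ₀ : 0 ≤ μ κ) : μ top * μ κ ^ (p - 2) ≤ esymmOn univ μ (p - 1) := by
  have hcard : #(Ioi κ) = p - 1 := by rw [Fin.card_Ioi]; omega
  have htop_mem : top ∈ Ioi κ := mem_Ioi.2 (by rw [Fin.lt_def]; omega)
  have hge : ∀ i ∈ Ioi κ, μ κ ≤ μ i := fun i hi => hmono (mem_Ioi.1 hi).le
  have hrest : μ κ ^ (p - 2) ≤ ∏ i ∈ (Ioi κ).erase top, μ i := by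
    have := prod_le_prod (s := (Ioi κ).erase top) (fun _ _ => hκ₀)
      fun i hi => hge i (mem_of_mem_erase hi)
    rwa [prod_const, card_erase_of_mem htop_mem, hcard, (by omega : p - 1 - 1 = p - 2)] at this
  calc μ top * μ κ ^ (p - 2) ≤ ∏ i ∈ Ioi κ, μ i := by
        rw [← mul_prod_erase _ _ htop_mem]
        exact mul_le_mul_of_nonneg_left hrest (hκ₀.trans (hge top htop_mem))
    _ ≤ esymmOn univ μ (p - 1) := by
        rw [← hcard]
        exact prod_le_esymmOn (by rwa [hcard, Nat.sub_add_cancel (by omega)]) (subset_univ _)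
          fun i hi => hκ₀.trans (hge i hi)

theorem sq_mul_mul_pow_le_of_monotone (hμ : μ ∈ gardingConeOn univ p) (hmono : Monotone μ)
    (hp : 2 ≤ p) {i₀ κ top : Fin n} (hκ : (κ : ℕ) + p = n) (htop : (top : ℕ) + 1 = n)
    (hi₀ : μ i₀ ≤ 0) (hκ₀ : 0 ≤ μ κ) :
    μ i₀ ^ 2 * μ top * μ κ ^ (p - 2)
      ≤ n * μ top * esymmOn univ μ p - (p + 1) * esymmOn univ μ (p + 1) := by
  obtain ⟨q, rfl⟩ : ∃ q, p = q + 2 := ⟨p - 2, by omega⟩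
  have hsum : esymmOn univ μ 1 ≤ n * μ top := by
    rw [esymmOn_one]
    simpa using sum_le_card_nsmul univ μ (μ top) fun i _ => hmono (by rw [Fin.le_def]; omega)
  have hprod := mul_pow_le_esymmOn_of_monotone hμ hmono hκ htop hp hκ₀
  have herase := esymmOn_le_esymmOn_erase (q := q) (gardingConeOn_anti (by omega) hμ)
    (mem_univ i₀) hi₀
  have hsq := sq_mul_esymmOn_erase_le hμ (mem_univ i₀)
  have hσ := hμ (q + 2) le_rfl
  simp only [Nat.add_sub_cancel, Nat.add_succ_sub_one] at hprod
  push_cast at hsq ⊢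
  calc μ i₀ ^ 2 * μ top * μ κ ^ q = μ i₀ ^ 2 * (μ top * μ κ ^ q) := by ring
    _ ≤ μ i₀ ^ 2 * esymmOn (univ.erase i₀) μ (q + 1) :=
        mul_le_mul_of_nonneg_left (hprod.trans herase) (sq_nonneg _)
    _ ≤ esymmOn univ μ 1 * esymmOn univ μ (q + 2) - (q + 3) * esymmOn univ μ (q + 3) := by
        linarith
    _ ≤ _ := by linarith [mul_le_mul_of_nonneg_right hsum hσ.le]

theorem neg_le_mul_max_rpow_of_monotone (hμ : μ ∈ gardingConeOn univ p) (hmono : Monotone μ)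
    (hp : 2 ≤ p) {i₀ : Fin n} (hi₀ : IsBot i₀) :
    -μ i₀ ≤ 2 * (p + 1) * n ^ p * max (esymmOn univ μ p ^ ((1 : ℝ) / p))
      (max (-esymmOn univ μ (p + 1)) 0 ^ ((1 : ℝ) / (p + 1))) := by
  have hpn : p ≤ n := by simpa using le_card_of_mem_gardingConeOn hμ
  have hτ : 0 ≤ max (-esymmOn univ μ (p + 1)) 0 := le_max_right _ _
  rcases le_or_gt 0 (μ i₀) with h₀ | h₀
  · exact (neg_nonpos.2 h₀).trans
      (mul_nonneg (by positivity) (le_max_of_le_right (Real.rpow_nonneg hτ _)))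
  set κ : Fin n := ⟨n - p, by omega⟩
  set top : Fin n := ⟨n - 1, by omega⟩
  have hgap := add_mul_pos_of_monotone hμ hmono (hi₀ κ) (by simp [κ]; omega)
  have hκ₀ : 0 < μ κ := pos_of_mul_pos_right (by linarith) (Nat.cast_nonneg _)
  have hκn : ((κ : ℕ) : ℝ) * μ κ ≤ n * μ κ :=
    mul_le_mul_of_nonneg_right (by exact_mod_cast κ.is_lt.le) hκ₀.le
  have key := sq_mul_mul_pow_le_of_monotone hμ hmono hp (top := top)
    (by simp [κ]; omega) (by simp [top]; omega) h₀.le hκ₀.le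
  have hτp : -((p + 1) * esymmOn univ μ (p + 1))
      ≤ (p + 1) * max (-esymmOn univ μ (p + 1)) 0 := by
    rw [← mul_neg]
    exact mul_le_mul_of_nonneg_left (le_max_left _ _) (by positivity)
  exact le_mul_max_rpow_of_sq_mul_mul_pow_le (b := μ top) hp
    (by exact_mod_cast (by omega : 1 ≤ n)) (neg_nonneg.2 h₀.le) hκ₀
    (hmono (Fin.le_def.2 (by simp [κ, top]; omega))) (by linarith) (hμ p le_rfl).le hτ
    (by rw [neg_sq]; linarith)

end Monotone

theorem stmt_6 (n p : ℕ) (hn : 2 ≤ n) (hp : 2 ≤ p) :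
    ∃ C : ℝ, 0 < C ∧ ∀ μ : Fin n → ℝ, μ ∈ gardingCone n p → Monotone μ →
      -C * max ((esymm n p μ) ^ ((1 : ℝ) / p))
          ((max (-(esymm n (p + 1) μ)) 0) ^ ((1 : ℝ) / (p + 1)))
        ≤ μ ⟨0, by omega⟩ := by
  refine ⟨2 * (p + 1) * n ^ p, by positivity, fun μ hμ hmono => ?_⟩
  rw [mem_gardingCone_iff] at hμ
  simp only [esymm_eq_esymmOn]
  have := neg_le_mul_max_rpow_of_monotone hμ hmono hp (i₀ := ⟨0, by omega⟩)
    fun j => Fin.le_def.2 (Nat.zero_le _)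
  linarith
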